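/- Let L be a decreasing (or increasing) label of a planar rooted tree T, let v be a branch point of T (a node with at least two edges below it), and let T' be the tree obtained from T by replacing the entire subtree below v by a single chain with the same number of edges. Let L' be the unique decreasing (resp. increasing) label of T' that agrees with L on all edges not below v and uses the same set of labels on the edges below v. If L is 312-avoiding, then L' is 312-avoiding. -/
import Mathlib


noncomputable section

/-- The balance (number of `U`s minus number of `D`s) of the word `w` on `[a, b)`,
where `true` encodes an up step `U` and `false` a down step `D`. -/
def bal (w : ℕ → Bool) (a b : ℕ) : ℤ :=
  (((Finset.Ico a b).filter fun k => w k = true).card : ℤ) -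
    (((Finset.Ico a b).filter fun k => w k = false).card : ℤ)

/-- `w` encodes a Dyck path of size `n` (only the first `2n` letters are used; the
rest are normalized to `false`). -/
def IsDyckWord (n : ℕ) (w : ℕ → Bool) : Prop :=
  (∀ k, 2 * n ≤ k → w k = false) ∧ bal w 0 (2 * n) = 0 ∧
    ∀ m, m ≤ 2 * n → 0 ≤ bal w 0 m

/-- `(i,j)` is a chord pair of `w`: `j` is the matching down step of the up step `i`. -/
def IsChord (w : ℕ → Bool) (i j : ℕ) : Prop :=
  i < j ∧ w i = true ∧ w j = false ∧ bal w i (j + 1) = 0 ∧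
    ∀ m, i < m → m ≤ j → 0 < bal w i m

/-- The edges of the planar rooted tree corresponding to `w`, i.e. its chord pairs. -/
def Edge (w : ℕ → Bool) : Type := {p : ℕ × ℕ // IsChord w p.1 p.2}

/-- `InPath w e e'` means `e' ∈ p(e)`: `e'` lies on the path from `e` to the root
(equivalently the chord `e'` nests the chord `e`); it is reflexive. -/
def InPath (w : ℕ → Bool) (e e' : Edge w) : Prop :=
  e'.1.1 ≤ e.1.1 ∧ e.1.2 ≤ e'.1.2

/-- `SRight w e e'` means the edge `e` is strictly right of the edge `e'`. -/
def SRight (w : ℕ → Bool) (e e' : Edge w) : Prop := e'.1.2 < e.1.1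

/-- A label of the tree: a bijection from the edges onto `{1, …, n}`. -/
def IsLabel (n : ℕ) (w : ℕ → Bool) (L : Edge w → ℕ) : Prop :=
  (∀ e, 1 ≤ L e ∧ L e ≤ n) ∧ Function.Injective L ∧
    ∀ v, 1 ≤ v → v ≤ n → ∃ e, L e = v

/-- A decreasing label: labels strictly decrease from the root towards the leaves,
i.e. a strict ancestor carries a strictly bigger label. -/
def IsDecLabel (n : ℕ) (w : ℕ → Bool) (L : Edge w → ℕ) : Prop :=
  IsLabel n w L ∧ ∀ e e', InPath w e e' → e ≠ e' → L e < L e'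

/-- An increasing label: labels strictly increase from the root towards the leaves. -/
def IsIncLabel (n : ℕ) (w : ℕ → Bool) (L : Edge w → ℕ) : Prop :=
  IsLabel n w L ∧ ∀ e e', InPath w e e' → e ≠ e' → L e' < L e

/-- The cover relation on labels of monotone type `P` (Definition of the paper):
`L'` covers `L` if they differ by swapping the labels of an edge `e_l` strictly left of
an edge `e_r` with `L e_l < L e_r`, with no edge strictly between them carrying a label
in `[L e_l, L e_r]`, and both labels have type `P`. -/
def Covers (w : ℕ → Bool) (P : (Edge w → ℕ) → Prop) (L L' : Edge w → ℕ) : Prop :=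
  P L ∧ P L' ∧ ∃ el er : Edge w, SRight w er el ∧
    (∀ e, e ≠ el → e ≠ er → L e = L' e) ∧
    L el < L er ∧ L' er = L el ∧ L' el = L er ∧
    ¬ ∃ ec : Edge w, SRight w ec el ∧ SRight w er ec ∧ L el ≤ L ec ∧ L ec ≤ L er

/-- The inversion number of the post-order word of the label `L`: the number of pairs
of edges `(e', e)` with `e'` before `e` in post-order (equivalently, the closing
position of `e'` is smaller) and `L e' < L e`. -/
def invNum (w : ℕ → Bool) (L : Edge w → ℕ) : ℕ :=
  Nat.card {p : Edge w × Edge w // p.1.1.2 < p.2.1.2 ∧ L p.1 < L p.2}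

/-- The generating function `Z(L, T) = Σ_{L ≤ L'} q^{inv(ω(L'))}`, summed over all
labels `L'` of monotone type `P` reachable from `L` by a chain of covers. -/
def Zgen (w : ℕ → Bool) (P : (Edge w → ℕ) → Prop) (L : Edge w → ℕ) : Polynomial ℤ :=
  ∑ᶠ (L' : Edge w → ℕ) (_ : P L' ∧ Relation.ReflTransGen (Covers w P) L L'),
    Polynomial.X ^ invNum w L'

/-- The quantum integer `[m] = 1 + q + ⋯ + q^{m-1}`. -/
def qInt (m : ℕ) : Polynomial ℤ := ∑ i ∈ Finset.range m, Polynomial.X ^ i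

/-- The quantum factorial `[m]!`. -/
def qFact (m : ℕ) : Polynomial ℤ := ∏ i ∈ Finset.range m, qInt (i + 1)

/-- `L` is 312-avoiding: there are no edges `e₁` strictly right of `e₂` strictly right
of `e₃` with `L e₂ < L e₃ < L e₁`. -/
def Avoid312 (w : ℕ → Bool) (L : Edge w → ℕ) : Prop :=
  ¬ ∃ e1 e2 e3 : Edge w, SRight w e1 e2 ∧ SRight w e2 e3 ∧ L e2 < L e3 ∧ L e3 < L e1

/-! ### Auxiliary lemmas -/

lemma bal_add (w : ℕ → Bool) {a b c : ℕ} (hab : a ≤ b) (hbc : b ≤ c) :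
    bal w a c = bal w a b + bal w b c := by
  unfold bal
  rw [← Finset.Ico_union_Ico_eq_Ico hab hbc, Finset.filter_union, Finset.filter_union,
    Finset.card_union_of_disjoint, Finset.card_union_of_disjoint]
  · push_cast; ring
  · exact Finset.disjoint_filter_filter (Finset.Ico_disjoint_Ico_consecutive a b c)
  · exact Finset.disjoint_filter_filter (Finset.Ico_disjoint_Ico_consecutive a b c)

lemma bal_congr {w w' : ℕ → Bool} {a b : ℕ} (h : ∀ k, a ≤ k → k < b → w k = w' k) :
    bal w a b = bal w' a b := by
  unfold bal
  congr 2 <;>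
  · congr 1
    apply Finset.filter_congr; intro k hk
    simp only [Finset.mem_Ico] at hk
    rw [h k hk.1 hk.2]

lemma bal_single (w : ℕ → Bool) (k : ℕ) : bal w k (k+1) = if w k = true then 1 else -1 := by
  unfold bal
  rcases Bool.eq_false_or_eq_true (w k) with h | h <;>
    simp [Finset.Ico_self, h, Finset.filter_singleton]

/-- Two chords of the same word are disjoint, strictly nested, or equal. -/
lemma chord_nest {w : ℕ → Bool} {i j a b : ℕ} (h1 : IsChord w i j) (h2 : IsChord w a b) :
    j < a ∨ b < i ∨ (a < i ∧ j < b) ∨ (i < a ∧ b < j) ∨ (i = a ∧ j = b) := by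
  obtain ⟨hij, hwi, hwj, hbal1, hpos1⟩ := h1
  obtain ⟨hab, hwa, hwb, hbal2, hpos2⟩ := h2
  have F3 : i ≠ b := by intro e; rw [e, hwb] at hwi; simp at hwi
  have F4 : j ≠ a := by intro e; rw [e, hwa] at hwj; simp at hwj
  have F5 : i ≠ a ∨ j = b := by
    rcases eq_or_ne i a with he | he
    · subst he
      rcases lt_trichotomy j b with h | h | h
      · have hp := hpos2 (j+1) (by omega) (by omega)
        linarith
      · exact Or.inr h
      · have hp := hpos1 (b+1) (by omega) (by omega)
        linarith
    · exact Or.inl he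
  have F6 : j ≠ b ∨ i = a := by
    rcases eq_or_ne j b with he | he
    · subst he
      rcases lt_trichotomy i a with h | h | h
      · have hd := bal_add w (le_of_lt h) (by omega : a ≤ j + 1)
        have hp := hpos1 a h (le_of_lt hab)
        right; exfalso; linarith
      · exact Or.inr h
      · have hd := bal_add w (le_of_lt h) (by omega : i ≤ j + 1)
        have hp := hpos2 i h (le_of_lt hij)
        right; exfalso; linarith
    · exact Or.inl he
  have F7 : ¬ (i < a ∧ a < j ∧ j < b) := by
    rintro ⟨g1, g2, g3⟩
    have hd := bal_add w (le_of_lt g1) (by omega : a ≤ j + 1)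
    have p1 := hpos1 a g1 (le_of_lt g2)
    have p2 := hpos2 (j+1) (by omega) (by omega)
    linarith
  have F8 : ¬ (a < i ∧ i < b ∧ b < j) := by
    rintro ⟨g1, g2, g3⟩
    have hd := bal_add w (le_of_lt g1) (by omega : i ≤ b + 1)
    have p1 := hpos2 i g1 (le_of_lt g2)
    have p2 := hpos1 (b+1) (by omega) (by omega)
    linarith
  omega

/-- A chord of `w'` whose span avoids the open interval `(a,b)` is a chord of `w`,
provided `w` and `w'` agree outside `(a,b)`. -/
lemma chord_transfer_outside {w w' : ℕ → Bool} {a b i j : ℕ}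
    (heq : ∀ k, ¬ (a < k ∧ k < b) → w' k = w k)
    (h' : IsChord w' i j) (hdisj : ∀ k, i ≤ k → k ≤ j → ¬ (a < k ∧ k < b)) :
    IsChord w i j := by
  obtain ⟨hij, hwi, hwj, hbal, hpos⟩ := h'
  have hc : ∀ m, m ≤ j + 1 → bal w i m = bal w' i m := by
    intro m hm
    exact bal_congr (fun k hk1 hk2 => (heq k (hdisj k hk1 (by omega))).symm)
  refine ⟨hij, ?_, ?_, ?_, ?_⟩
  · rw [← heq i (hdisj i le_rfl (le_of_lt hij))]; exact hwi
  · rw [← heq j (hdisj j (le_of_lt hij) le_rfl)]; exact hwj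
  · rw [hc (j+1) le_rfl]; exact hbal
  · intro m g1 g2; rw [hc m (by omega)]; exact hpos m g1 g2

/-- A chord of `w'` strictly containing the common chord `(a,b)` is a chord of `w`. -/
lemma chord_transfer_contain {w w' : ℕ → Bool} {a b i j : ℕ}
    (hca : IsChord w a b) (hca' : IsChord w' a b)
    (heq : ∀ k, ¬ (a < k ∧ k < b) → w' k = w k)
    (h' : IsChord w' i j) (hia : i < a) (hbj : b < j) :
    IsChord w i j := by
  obtain ⟨hij, hwi, hwj, hbal, hpos⟩ := h'
  obtain ⟨hab, hwa, hwb, hbalab, hposab⟩ := hca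
  obtain ⟨_, hwa', hwb', hbalab', hposab'⟩ := hca'
  have s1 : bal w a (a+1) = 1 := by rw [bal_single, hwa]; simp
  have s2 : bal w b (b+1) = -1 := by rw [bal_single, hwb]; simp
  have s1' : bal w' a (a+1) = 1 := by rw [bal_single, hwa']; simp
  have s2' : bal w' b (b+1) = -1 := by rw [bal_single, hwb']; simp
  have innerw : bal w (a+1) b = 0 := by
    have h1 := bal_add w (by omega : a ≤ a+1) (by omega : a+1 ≤ b+1)
    have h2 := bal_add w (by omega : a+1 ≤ b) (by omega : b ≤ b+1)
    linarith
  have innerw' : bal w' (a+1) b = 0 := by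
    have h1 := bal_add w' (by omega : a ≤ a+1) (by omega : a+1 ≤ b+1)
    have h2 := bal_add w' (by omega : a+1 ≤ b) (by omega : b ≤ b+1)
    linarith
  have innernn : ∀ m, a < m → m ≤ b → 0 ≤ bal w (a+1) m := by
    intro m g1 g2
    have hp := hposab m g1 g2
    have hd := bal_add w (by omega : a ≤ a+1) (by omega : a+1 ≤ m)
    linarith
  have eL : bal w i (a+1) = bal w' i (a+1) :=
    bal_congr (fun k hk1 hk2 => (heq k (by omega)).symm)
  have eR : ∀ m, b ≤ m → bal w b m = bal w' b m := fun m hm =>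
    bal_congr (fun k hk1 hk2 => (heq k (by omega)).symm)
  refine ⟨hij, ?_, ?_, ?_, ?_⟩
  · rw [← heq i (by omega)]; exact hwi
  · rw [← heq j (by omega)]; exact hwj
  · have d := bal_add w (by omega : i ≤ a+1) (by omega : a+1 ≤ j+1)
    have d2 := bal_add w (by omega : a+1 ≤ b) (by omega : b ≤ j+1)
    have d' := bal_add w' (by omega : i ≤ a+1) (by omega : a+1 ≤ j+1)
    have d2' := bal_add w' (by omega : a+1 ≤ b) (by omega : b ≤ j+1)
    have e3 := eR (j+1) (by omega)
    linarith
  · intro m g1 g2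
    rcases le_or_gt m (a+1) with h | h
    · have e : bal w i m = bal w' i m :=
        bal_congr (fun k hk1 hk2 => (heq k (by omega)).symm)
      rw [e]; exact hpos m g1 g2
    · rcases le_or_gt m b with h2 | h2
      · have d := bal_add w (by omega : i ≤ a+1) (by omega : a+1 ≤ m)
        have p := hpos (a+1) (by omega) (by omega)
        have nn := innernn m (by omega) h2
        linarith
      · have d := bal_add w (by omega : i ≤ a+1) (by omega : a+1 ≤ m)
        have d2 := bal_add w (by omega : a+1 ≤ b) (by omega : b ≤ m)
        have d' := bal_add w' (by omega : i ≤ a+1) (by omega : a+1 ≤ m)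
        have d2' := bal_add w' (by omega : a+1 ≤ b) (by omega : b ≤ m)
        have e3 := eR m (by omega)
        have hp := hpos m g1 g2
        linarith

/-- let `L` be a decreasing (or increasing) label of the tree of `w`, let
`v` be a branch point (a node with at least two edges below it — equivalently, at least
two distinct maximal edges below it), and let `w'` be the tree obtained by replacing the
entire subtree below `v` by a single chain with the same number of edges.  The node `v`
is either the lower node of a chord `(a,b)` (first disjunct of `hnode`) or the root
(second disjunct).  `L'` is the unique label of `w'` of the same monotone type agreeing
with `L` on all edges not below `v` and using the same set of labels below `v`.
If `L` is `312`-avoiding then so is `L'`. -/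
theorem stmt6 (n : ℕ) (w w' : ℕ → Bool) (hw : IsDyckWord n w) (hw' : IsDyckWord n w')
    (Below : Edge w → Prop) (Below' : Edge w' → Prop) (a b : ℕ)
    (hnode :
      (IsChord w a b ∧ IsChord w' a b ∧
        (∀ e : Edge w, Below e ↔ a < e.1.1 ∧ e.1.2 < b) ∧
        (∀ e : Edge w', Below' e ↔ a < e.1.1 ∧ e.1.2 < b) ∧
        (∀ k, ¬ (a < k ∧ k < b) → w' k = w k) ∧
        (∀ k, a < k → k < b → (w' k = true ↔ k ≤ a + (b - a - 1) / 2)))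
      ∨
      ((∀ e : Edge w, Below e) ∧ (∀ e : Edge w', Below' e) ∧
        (∀ k, k < 2 * n → (w' k = true ↔ k < n))))
    (hbranch : ∃ e1 e2 : Edge w, Below e1 ∧ Below e2 ∧ e1 ≠ e2 ∧
      (∀ f, Below f → InPath w e1 f → f = e1) ∧
      (∀ f, Below f → InPath w e2 f → f = e2))
    (L : Edge w → ℕ) (L' : Edge w' → ℕ)
    (hmono : (IsDecLabel n w L ∧ IsDecLabel n w' L') ∨
             (IsIncLabel n w L ∧ IsIncLabel n w' L'))
    (hagree : ∀ (i j : ℕ) (h : IsChord w i j) (h' : IsChord w' i j),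
      ¬ Below ⟨(i, j), h⟩ → L ⟨(i, j), h⟩ = L' ⟨(i, j), h'⟩)
    (hset : {v : ℕ | ∃ e, Below e ∧ L e = v} = {v : ℕ | ∃ e, Below' e ∧ L' e = v})
    (hAv : Avoid312 w L) :
    Avoid312 w' L' := by
  rintro ⟨e1, e2, e3, hr12, hr23, hl23, hl31⟩
  have r12 : e2.1.2 < e1.1.1 := hr12
  have r23 : e3.1.2 < e2.1.1 := hr23
  have c1 : e1.1.1 < e1.1.2 := e1.2.1
  have c2 : e2.1.1 < e2.1.2 := e2.2.1
  have c3 : e3.1.1 < e3.1.2 := e3.2.1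
  rcases hnode with ⟨hca, hca', hB, hB', heq, hint⟩ | ⟨hBall, hB'all, hroot⟩
  · -- `v` is the lower node of the chord `(a,b)`
    have hab : a < b := hca.1
    have key : ∀ e : Edge w', Below' e →
        a < e.1.1 ∧ e.1.1 ≤ a + (b - a - 1) / 2 ∧ a + (b - a - 1) / 2 < e.1.2 ∧ e.1.2 < b := by
      intro e he
      obtain ⟨hi, hj⟩ := (hB' e).1 he
      have hij : e.1.1 < e.1.2 := e.2.1
      have h1 : e.1.1 ≤ a + (b - a - 1) / 2 := (hint e.1.1 hi (by omega)).mp e.2.2.1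
      have h2 : a + (b - a - 1) / 2 < e.1.2 := by
        by_contra hle
        push_neg at hle
        have ht := (hint e.1.2 (by omega) hj).mpr hle
        rw [e.2.2.2.1] at ht
        simp at ht
      exact ⟨hi, h1, h2, hj⟩
    have noSR : ∀ e f : Edge w', Below' e → Below' f → ¬ SRight w' e f := by
      intro e f he hf hef
      have k1 := key e he
      have k2 := key f hf
      have hef' : f.1.2 < e.1.1 := hef
      omega
    have transfer : ∀ e : Edge w', ¬ Below' e →
        ∃ f : Edge w, f.1.1 = e.1.1 ∧ f.1.2 = e.1.2 ∧ L f = L' e := by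
      intro e he
      obtain ⟨⟨i, j⟩, h'⟩ := e
      have hnest := chord_nest h' hca'
      have hch : IsChord w i j := by
        rcases hnest with h | h | h | h | h
        · exact chord_transfer_outside heq h'
            (fun k hk1 hk2 => by intro hcon; omega)
        · exact chord_transfer_outside heq h'
            (fun k hk1 hk2 => by intro hcon; omega)
        · exact absurd ((hB' ⟨(i, j), h'⟩).mpr h) he
        · exact chord_transfer_contain hca hca' heq h' h.1 h.2
        · obtain ⟨rfl, rfl⟩ := h; exact hca
      refine ⟨⟨(i, j), hch⟩, rfl, rfl, ?_⟩
      apply hagree i j hch h'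
      intro hb
      exact he ((hB' ⟨(i, j), h'⟩).mpr ((hB ⟨(i, j), hch⟩).mp hb))
    have exists_below : ∀ e : Edge w', Below' e → ∃ f : Edge w, Below f ∧ L f = L' e := by
      intro e he
      have hmem : L' e ∈ {v : ℕ | ∃ e, Below' e ∧ L' e = v} := ⟨e, he, rfl⟩
      rw [← hset] at hmem
      exact hmem
    by_cases b1 : Below' e1 <;> by_cases b2 : Below' e2 <;> by_cases b3 : Below' e3
    · exact noSR e1 e2 b1 b2 hr12
    · exact noSR e1 e2 b1 b2 hr12
    · exact noSR e1 e3 b1 b3 (show e3.1.2 < e1.1.1 by omega)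
    · -- only e1 below v
      have k1 := key e1 b1
      have he2a : e2.1.2 < a := by
        rcases chord_nest e2.2 hca' with h | h | h | h | h
        · exact h
        · omega
        · exact absurd ((hB' e2).mpr h) b2
        · omega
        · omega
      obtain ⟨F2, hi2, hj2, hL2⟩ := transfer e2 b2
      obtain ⟨F3, hi3, hj3, hL3⟩ := transfer e3 b3
      obtain ⟨f, hf, hLf⟩ := exists_below e1 b1
      obtain ⟨hfa, hfb⟩ := (hB f).mp hf
      refine hAv ⟨f, F2, F3, ?_, ?_, ?_, ?_⟩
      · show F2.1.2 < f.1.1; omega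
      · show F3.1.2 < F2.1.1; omega
      · rw [hL2, hL3]; exact hl23
      · rw [hL3, hLf]; exact hl31
    · exact noSR e2 e3 b2 b3 hr23
    · -- only e2 below v
      have k2 := key e2 b2
      have he3a : e3.1.2 < a := by
        rcases chord_nest e3.2 hca' with h | h | h | h | h
        · exact h
        · omega
        · exact absurd ((hB' e3).mpr h) b3
        · omega
        · omega
      have he1b : b < e1.1.1 := by
        rcases chord_nest e1.2 hca' with h | h | h | h | h
        · omega
        · exact h
        · exact absurd ((hB' e1).mpr h) b1
        · omega
        · omega
      obtain ⟨F1, hi1, hj1, hL1⟩ := transfer e1 b1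
      obtain ⟨F3, hi3, hj3, hL3⟩ := transfer e3 b3
      obtain ⟨f, hf, hLf⟩ := exists_below e2 b2
      obtain ⟨hfa, hfb⟩ := (hB f).mp hf
      refine hAv ⟨F1, f, F3, ?_, ?_, ?_, ?_⟩
      · show f.1.2 < F1.1.1; omega
      · show F3.1.2 < f.1.1; omega
      · rw [hLf, hL3]; exact hl23
      · rw [hL3, hL1]; exact hl31
    · -- only e3 below v
      have k3 := key e3 b3
      have he2b : b < e2.1.1 := by
        rcases chord_nest e2.2 hca' with h | h | h | h | h
        · omega
        · exact h
        · exact absurd ((hB' e2).mpr h) b2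
        · omega
        · omega
      obtain ⟨F1, hi1, hj1, hL1⟩ := transfer e1 b1
      obtain ⟨F2, hi2, hj2, hL2⟩ := transfer e2 b2
      obtain ⟨f, hf, hLf⟩ := exists_below e3 b3
      obtain ⟨hfa, hfb⟩ := (hB f).mp hf
      refine hAv ⟨F1, F2, f, ?_, ?_, ?_, ?_⟩
      · show F2.1.2 < F1.1.1; omega
      · show f.1.2 < F2.1.1; omega
      · rw [hL2, hLf]; exact hl23
      · rw [hLf, hL1]; exact hl31
    · -- no edge below v
      obtain ⟨F1, hi1, hj1, hL1⟩ := transfer e1 b1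
      obtain ⟨F2, hi2, hj2, hL2⟩ := transfer e2 b2
      obtain ⟨F3, hi3, hj3, hL3⟩ := transfer e3 b3
      refine hAv ⟨F1, F2, F3, ?_, ?_, ?_, ?_⟩
      · show F2.1.2 < F1.1.1; omega
      · show F3.1.2 < F2.1.1; omega
      · rw [hL2, hL3]; exact hl23
      · rw [hL3, hL1]; exact hl31
  · -- `v` is the root: `w'` is a single chain, which has no `SRight` pair at all
    have h1 : e1.1.1 < 2 * n := by
      by_contra h
      push_neg at h
      have ht := hw'.1 e1.1.1 h
      rw [e1.2.2.1] at ht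
      simp at ht
    have h2 : e1.1.1 < n := (hroot e1.1.1 h1).mp e1.2.2.1
    have h3 : n ≤ e2.1.2 := by
      rcases lt_or_ge e2.1.2 (2 * n) with h | h
      · by_contra hc
        push_neg at hc
        have ht := (hroot e2.1.2 h).mpr hc
        rw [e2.2.2.2.1] at ht
        simp at ht
      · omega
    omega


end
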